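/- Let f : ℝ → ℝ be concave on [x₁, x₂]. Then ∫_{x₁}^{x₂} (f(x) − ℓ(x)) dx ≥ (1/2)(x₂−x₁)[f((x₁+x₂)/2) − (f(x₁)+f(x₂))/2], where ℓ is the affine function with ℓ(x₁)=f(x₁) and ℓ(x₂)=f(x₂). -/

import Mathlib

/-!
Split `[x₁, x₂]` at its midpoint `m`. On each half the concave `f` lies above its chord, so its
integral there is at least the trapezoid area; the two half-trapezoids exceed the full trapezoid,
which is `∫ ℓ`, by exactly the triangle with apex `(m, f m)`.

Integrability comes from boundedness and continuity on the interior: a concave function on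
`[a, b]` is bounded below by `min (f a) (f b)`, and above by reflecting through the midpoint,
`f x ≤ 2 f ((a + b) / 2) - f (a + b - x)`.
-/

open MeasureTheory intervalIntegral

theorem integral_chord (a b u v : ℝ) :
    ∫ x in a..b, (u + (v - u) * (x - a) / (b - a)) = (b - a) * (u + v) / 2 := by
  rcases eq_or_ne b a with rfl | hab
  · simp
  have hba : b - a ≠ 0 := sub_ne_zero.2 hab
  simp only [mul_div_right_comm _ _ (b - a)]
  rw [integral_add intervalIntegrable_const
      ((by fun_prop : Continuous fun x : ℝ => (v - u) / (b - a) * (x - a)).intervalIntegrable a b),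
    intervalIntegral.integral_const_mul, integral_comp_sub_right (fun x => x)]
  simp
  field_simp
  ring

namespace ConcaveOn

open Set

variable {f : ℝ → ℝ} {a b : ℝ}

theorem add_le_two_mul_apply_add_div_two {s : Set ℝ} (hf : ConcaveOn ℝ s f) {x y : ℝ}
    (hx : x ∈ s) (hy : y ∈ s) : f x + f y ≤ 2 * f ((x + y) / 2) := by
  have hmid := hf.2 hx hy (by norm_num : (0 : ℝ) ≤ 1 / 2) (by norm_num : (0 : ℝ) ≤ 1 / 2)
    (by norm_num)
  rw [smul_eq_mul, smul_eq_mul, smul_eq_mul, smul_eq_mul,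
    show 1 / 2 * x + 1 / 2 * y = (x + y) / 2 by ring] at hmid
  linarith

theorem exists_abs_le_of_Icc (hf : ConcaveOn ℝ (Icc a b) f) :
    ∃ M, ∀ x ∈ Icc a b, |f x| ≤ M := by
  have hlow : ∀ y ∈ Icc a b, -(|f a| + |f b|) ≤ f y := fun y hy =>
    (le_min (by linarith [neg_abs_le (f a), abs_nonneg (f b)])
      (by linarith [neg_abs_le (f b), abs_nonneg (f a)])).trans
    (hf.min_le_of_mem_Icc (left_mem_Icc.2 (hy.1.trans hy.2))
      (right_mem_Icc.2 (hy.1.trans hy.2)) hy)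
  refine ⟨2 * |f ((a + b) / 2)| + |f a| + |f b|, fun x hx => abs_le.2 ⟨?_, ?_⟩⟩
  · linarith [hlow x hx, abs_nonneg (f ((a + b) / 2))]
  · have hreflect : a + b - x ∈ Icc a b := ⟨by linarith [hx.2], by linarith [hx.1]⟩
    have hmid := hf.add_le_two_mul_apply_add_div_two hx hreflect
    rw [show (x + (a + b - x)) / 2 = (a + b) / 2 by ring] at hmid
    linarith [hlow _ hreflect, le_abs_self (f ((a + b) / 2))]

theorem intervalIntegrable (hf : ConcaveOn ℝ (Icc a b) f) (hab : a ≤ b) :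
    IntervalIntegrable f volume a b := by
  rcases hab.eq_or_lt with rfl | hab
  · exact IntervalIntegrable.refl
  obtain ⟨M, hM⟩ := hf.exists_abs_le_of_Icc
  have hcont : ContinuousOn f (Ioo a b) :=
    (hf.subset Ioo_subset_Icc_self (convex_Ioo a b)).continuousOn isOpen_Ioo
  rw [intervalIntegrable_iff_integrableOn_Ioo_of_le hab.le]
  refine ⟨hcont.aestronglyMeasurable measurableSet_Ioo,
    .restrict_of_bounded (C := M) measure_Ioo_lt_top ?_⟩
  filter_upwards [ae_restrict_mem measurableSet_Ioo] with x hx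
    using hM x (Ioo_subset_Icc_self hx)

theorem chord_le (hf : ConcaveOn ℝ (Icc a b) f) {x : ℝ} (hx : x ∈ Icc a b) :
    f a + (f b - f a) * (x - a) / (b - a) ≤ f x := by
  rcases (hx.1.trans hx.2).eq_or_lt with rfl | hab
  · obtain rfl : x = a := le_antisymm hx.2 hx.1
    simp
  have hba : b - a ≠ 0 := by linarith
  have hconc := hf.2 (left_mem_Icc.2 hab.le) (right_mem_Icc.2 hab.le)
    (div_nonneg (by linarith [hx.2]) (by linarith) : 0 ≤ (b - x) / (b - a))
    (div_nonneg (by linarith [hx.1]) (by linarith) : 0 ≤ (x - a) / (b - a))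
    (by field_simp; ring)
  have hcomb : ((b - x) / (b - a)) • a + ((x - a) / (b - a)) • b = x := by
    simp only [smul_eq_mul]; field_simp; ring
  rw [hcomb, smul_eq_mul, smul_eq_mul] at hconc
  calc f a + (f b - f a) * (x - a) / (b - a)
      = (b - x) / (b - a) * f a + (x - a) / (b - a) * f b := by field_simp; ring
    _ ≤ f x := hconc

theorem integral_sub_chord (hf : ConcaveOn ℝ (Icc a b) f) (hab : a ≤ b) :
    ∫ x in a..b, (f x - (f a + (f b - f a) * (x - a) / (b - a))) =
      (∫ x in a..b, f x) - (b - a) * (f a + f b) / 2 := by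
  rw [integral_sub (hf.intervalIntegrable hab) ((by fun_prop : Continuous fun x : ℝ =>
      f a + (f b - f a) * (x - a) / (b - a)).intervalIntegrable a b), integral_chord]

theorem trapezoid_le_integral (hf : ConcaveOn ℝ (Icc a b) f) (hab : a ≤ b) :
    (b - a) * (f a + f b) / 2 ≤ ∫ x in a..b, f x := by
  have hnonneg : 0 ≤ ∫ x in a..b, (f x - (f a + (f b - f a) * (x - a) / (b - a))) :=
    intervalIntegral.integral_nonneg hab fun x hx => sub_nonneg.2 (hf.chord_le hx)
  rw [hf.integral_sub_chord hab] at hnonneg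
  linarith

end ConcaveOn

/-- for `f` concave on `[x₁,x₂]`, the integral of `f` minus its chord
is at least the area of the midpoint triangle:
`∫ (f - ℓ) ≥ (1/2)(x₂-x₁)[f((x₁+x₂)/2) - (f x₁ + f x₂)/2]`. -/
theorem concave_chord_integral_lower_bound
    (f : ℝ → ℝ) (x₁ x₂ : ℝ) (hx : x₁ < x₂)
    (hconc : ConcaveOn ℝ (Set.Icc x₁ x₂) f) :
    (∫ x in x₁..x₂,
        (f x - (f x₁ + (f x₂ - f x₁) * (x - x₁) / (x₂ - x₁))))
      ≥ (1/2) * (x₂ - x₁) * (f ((x₁ + x₂) / 2) - (f x₁ + f x₂) / 2) := by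
  have hm₁ : x₁ ≤ (x₁ + x₂) / 2 := by linarith
  have hm₂ : (x₁ + x₂) / 2 ≤ x₂ := by linarith
  have hconc_left := hconc.subset (Set.Icc_subset_Icc_right hm₂) (convex_Icc _ _)
  have hconc_right := hconc.subset (Set.Icc_subset_Icc_left hm₁) (convex_Icc _ _)
  have hleft := hconc_left.trapezoid_le_integral hm₁
  have hright := hconc_right.trapezoid_le_integral hm₂
  rw [hconc.integral_sub_chord hx.le, ← integral_add_adjacent_intervals
    (hconc_left.intervalIntegrable hm₁) (hconc_right.intervalIntegrable hm₂)]
  linarith
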